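/- Let P be a rational polytope in ℝ^k and let Q_1, …, Q_n ⊆ P be finitely many rational polytopes contained in P. Then there exists a finite rational polytope chamber decomposition (P_s) of P such that for every chamber P_s, every face F of P_s, and every i ∈ {1, …, n}, either the intrinsic interior of F is contained in Q_i or the intrinsic interior of F is disjoint from Q_i. -/

import Mathlib

/-- A rational polytope in `ℝ^k` is the convex hull of a nonempty finite set of
points all of whose coordinates are rational. -/
def IsRationalPolytope {k : ℕ} (Q : Set (Fin k → ℝ)) : Prop :=
  ∃ S : Finset (Fin k → ℝ), S.Nonempty ∧
    (∀ x ∈ S, ∀ i, ∃ q : ℚ, x i = (q : ℝ)) ∧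
    Q = convexHull ℝ (S : Set (Fin k → ℝ))

/-- A finite rational polytope chamber decomposition of `P`: a finite family of
rational polytopes whose union is `P` and whose intrinsic (relative) interiors
are pairwise disjoint. -/
def IsRatPolyChamberDecomp {k : ℕ} (P : Set (Fin k → ℝ)) (m : ℕ)
    (Ps : Fin m → Set (Fin k → ℝ)) : Prop :=
  (∀ s, IsRationalPolytope (Ps s)) ∧
  (⋃ s, Ps s) = P ∧
  ∀ s t, s ≠ t →
    Disjoint (intrinsicInterior ℝ (Ps s)) (intrinsicInterior ℝ (Ps t))

/-- A face of a convex set `P ⊆ ℝ^k` is a nonempty, closed, convex subset of `P`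
which is extreme in `P`: whenever a point of `F` lies in the open segment
between two points of `P`, both endpoints lie in `F`. -/
def IsFace {k : ℕ} (P F : Set (Fin k → ℝ)) : Prop :=
  F.Nonempty ∧ IsClosed F ∧ Convex ℝ F ∧ IsExtreme ℝ P F


/-!
Fourier–Motzkin elimination shows that the convex hull of finitely many rational points is cut out
by finitely many rational affine inequalities; conversely, a bounded polyhedron cut out by rational
inequalities is the convex hull of its extreme points (Krein–Milman), which are finitely many and
rational, each being the unique solution of the rational linear system of its active constraints.

Write `P` and every `Q i` by rational inequalities and cut `P` by all hyperplanes bounding the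
`Q i`, choosing a side of each. Every bounding functional `g` has constant sign on such a cell, so
if `g ≥ 0` at a point of the relative interior of a subset `F` of the cell, then `g ≥ 0` on all of
`F` (pushing past that point along a line would otherwise change the sign of `g` inside `F`).
Hence the relative interior of `F` lies in `Q i` as soon as it meets `Q i`, and two cells whose
relative interiors meet coincide.
-/

open Set Filter Topology

section IntrinsicInterior

variable {E : Type*} [AddCommGroup E] [Module ℝ E] [TopologicalSpace E] [IsTopologicalAddGroup E]
  [ContinuousSMul ℝ E] {C : Set E} {x y : E}

theorem exists_neg_lineMap_mem_of_mem_intrinsicInterior (hx : x ∈ intrinsicInterior ℝ C)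
    (hy : y ∈ C) : ∃ t : ℝ, t < 0 ∧ AffineMap.lineMap x y t ∈ C := by
  obtain ⟨x', hx', rfl⟩ := mem_intrinsicInterior.1 hx
  let γ : ℝ → affineSpan ℝ C := fun t =>
    ⟨AffineMap.lineMap (x' : E) y t, AffineMap.lineMap_mem t x'.2 (subset_affineSpan ℝ C hy)⟩
  have hγ : Continuous γ := (AffineMap.lineMap_continuous.comp continuous_id).subtype_mk _
  have hγ0 : γ 0 = x' := Subtype.ext (AffineMap.lineMap_apply_zero _ _)
  have hnhds : ∀ᶠ t in 𝓝 (0 : ℝ), γ t ∈ ((↑) ⁻¹' C : Set (affineSpan ℝ C)) :=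
    hγ.continuousAt.preimage_mem_nhds (hγ0 ▸ mem_interior_iff_mem_nhds.1 hx')
  obtain ⟨t, ht, ht0⟩ := ((hnhds.filter_mono nhdsWithin_le_nhds).and
    (self_mem_nhdsWithin : Iio (0 : ℝ) ∈ 𝓝[<] 0)).exists
  exact ⟨t, ht0, ht⟩

def SignDefiniteOn {α : Type*} (f : α → ℝ) (s : Set α) : Prop :=
  (∀ x ∈ s, 0 ≤ f x) ∨ ∀ x ∈ s, f x ≤ 0

theorem SignDefiniteOn.mono {α : Type*} {f : α → ℝ} {s t : Set α} (hf : SignDefiniteOn f s)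
    (hts : t ⊆ s) : SignDefiniteOn f t :=
  hf.imp (fun hf x hx => hf x (hts hx)) fun hf x hx => hf x (hts hx)

theorem SignDefiniteOn.neg {α : Type*} {f : α → ℝ} {s : Set α} (hf : SignDefiniteOn f s) :
    SignDefiniteOn (-f) s :=
  hf.symm.imp (fun hf x hx => neg_nonneg.2 (hf x hx)) fun hf x hx => neg_nonpos.2 (hf x hx)

theorem SignDefiniteOn.nonneg_of_mem_intrinsicInterior {f : E →ᵃ[ℝ] ℝ}
    (hf : SignDefiniteOn f C) (hx : x ∈ intrinsicInterior ℝ C) (hfx : 0 ≤ f x) (hy : y ∈ C) :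
    0 ≤ f y := by
  rcases hf with hf | hf
  · exact hf y hy
  obtain ⟨t, ht, hmem⟩ := exists_neg_lineMap_mem_of_mem_intrinsicInterior hx hy
  have hfx0 : f x = 0 := le_antisymm (hf x (intrinsicInterior_subset hx)) hfx
  have := hf _ hmem
  rw [AffineMap.apply_lineMap, hfx0, AffineMap.lineMap_apply_ring'] at this
  nlinarith

end IntrinsicInterior

abbrev RatAffine (d : ℕ) := (Fin d → ℚ) × ℚ

namespace RatAffine

variable {d : ℕ}

def eval (p : RatAffine d) : (Fin d → ℝ) →ᵃ[ℝ] ℝ where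
  toFun x := ∑ i, (p.1 i : ℝ) * x i + p.2
  linear := ∑ i, (p.1 i : ℝ) • LinearMap.proj i
  map_vadd' x v := by simp [Finset.sum_add_distrib, mul_add]; ring

theorem eval_apply (p : RatAffine d) (x : Fin d → ℝ) :
    p.eval x = ∑ i, (p.1 i : ℝ) * x i + p.2 := rfl

theorem eval_linear_apply (p : RatAffine d) (v : Fin d → ℝ) :
    p.eval.linear v = ∑ i, (p.1 i : ℝ) * v i := by
  simp [eval]

@[simp] theorem eval_neg (p : RatAffine d) (x : Fin d → ℝ) : (-p).eval x = -p.eval x := by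
  simp [eval_apply]; ring

@[simp] theorem eval_add (p q : RatAffine d) (x : Fin d → ℝ) :
    (p + q).eval x = p.eval x + q.eval x := by
  simp [eval_apply, add_mul, Finset.sum_add_distrib]; ring

@[simp] theorem eval_smul (c : ℚ) (p : RatAffine d) (x : Fin d → ℝ) :
    (c • p).eval x = c * p.eval x := by
  simp [eval_apply, mul_add, Finset.mul_sum, mul_assoc]

theorem eval_append {N : ℕ} (a : Fin d → ℚ) (b : Fin N → ℚ) (c : ℚ) (y : Fin d → ℝ)
    (w : Fin N → ℝ) :
    eval (Fin.append a b, c) (Fin.append y w) = ∑ i, (a i : ℝ) * y i + eval (b, c) w := by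
  simp [eval_apply, Fin.sum_univ_add]; ring

def lastCoeff (p : RatAffine (d + 1)) : ℚ := p.1 (Fin.last d)

def init (p : RatAffine (d + 1)) : RatAffine d := (Fin.init p.1, p.2)

theorem eval_snoc (p : RatAffine (d + 1)) (y : Fin d → ℝ) (z : ℝ) :
    p.eval (Fin.snoc y z) = p.init.eval y + p.lastCoeff * z := by
  simp [eval_apply, init, lastCoeff, Fin.sum_univ_castSucc, Fin.init]; ring

noncomputable def lastRoot (p : RatAffine (d + 1)) (y : Fin d → ℝ) : ℝ :=
  -p.init.eval y / p.lastCoeff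

theorem eval_snoc_eq_mul_sub_lastRoot {p : RatAffine (d + 1)} (hp : p.lastCoeff ≠ 0)
    (y : Fin d → ℝ) (z : ℝ) : p.eval (Fin.snoc y z) = p.lastCoeff * (z - p.lastRoot y) := by
  have : (p.lastCoeff : ℝ) ≠ 0 := by exact_mod_cast hp
  rw [eval_snoc, lastRoot]; field_simp; ring

def fmCombine (p q : RatAffine (d + 1)) : RatAffine d :=
  (-q.lastCoeff) • p.init + p.lastCoeff • q.init

theorem eval_fmCombine (p q : RatAffine (d + 1)) (y : Fin d → ℝ) (z : ℝ) :
    (fmCombine p q).eval y =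
      -q.lastCoeff * p.eval (Fin.snoc y z) + p.lastCoeff * q.eval (Fin.snoc y z) := by
  simp [fmCombine, eval_snoc]; ring

end RatAffine

open RatAffine

def ratPolyhedron {d : ℕ} (S : Set (RatAffine d)) : Set (Fin d → ℝ) :=
  {x | ∀ p ∈ S, 0 ≤ p.eval x}

section RatPolyhedron

variable {d : ℕ} {S T : Set (RatAffine d)}

theorem mem_ratPolyhedron {x : Fin d → ℝ} : x ∈ ratPolyhedron S ↔ ∀ p ∈ S, 0 ≤ p.eval x :=
  Iff.rfl

theorem ratPolyhedron_union : ratPolyhedron (S ∪ T) = ratPolyhedron S ∩ ratPolyhedron T := by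
  ext x; simp [ratPolyhedron, or_imp, forall_and]

open scoped Pointwise in
theorem mem_ratPolyhedron_union_neg {x : Fin d → ℝ} :
    x ∈ ratPolyhedron (S ∪ -S) ↔ ∀ p ∈ S, p.eval x = 0 := by
  rw [ratPolyhedron_union]
  simp only [mem_inter_iff, mem_ratPolyhedron, Set.mem_neg]
  refine ⟨fun h p hp => le_antisymm ?_ (h.1 p hp),
    fun h => ⟨fun p hp => (h p hp).ge, fun p hp => ?_⟩⟩
  · simpa using h.2 (-p) (by simpa using hp)
  · simpa using (h (-p) hp).le

theorem convex_ratPolyhedron (S : Set (RatAffine d)) : Convex ℝ (ratPolyhedron S) := by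
  have : ratPolyhedron S = ⋂ p ∈ S, p.eval ⁻¹' Ici 0 := by ext; simp [ratPolyhedron]
  exact this ▸ convex_iInter₂ fun p _ => (convex_Ici 0).affine_preimage p.eval

theorem isClosed_ratPolyhedron (S : Set (RatAffine d)) : IsClosed (ratPolyhedron S) := by
  have : ratPolyhedron S = ⋂ p ∈ S, p.eval ⁻¹' Ici 0 := by ext; simp [ratPolyhedron]
  exact this ▸ isClosed_biInter fun p _ =>
    isClosed_Ici.preimage p.eval.continuous_of_finiteDimensional

theorem subset_ratPolyhedron_of_mem_intrinsicInterior {F : Set (Fin d → ℝ)}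
    (hS : ∀ p ∈ S, SignDefiniteOn p.eval F) {z : Fin d → ℝ} (hz : z ∈ intrinsicInterior ℝ F)
    (hzS : z ∈ ratPolyhedron S) : F ⊆ ratPolyhedron S :=
  fun _ hy p hp => (hS p hp).nonneg_of_mem_intrinsicInterior hz (hzS p hp) hy

theorem intrinsicInterior_subset_or_disjoint_ratPolyhedron {F : Set (Fin d → ℝ)}
    (hS : ∀ p ∈ S, SignDefiniteOn p.eval F) :
    intrinsicInterior ℝ F ⊆ ratPolyhedron S ∨
      Disjoint (intrinsicInterior ℝ F) (ratPolyhedron S) := by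
  rw [or_iff_not_imp_right, not_disjoint_iff]
  rintro ⟨z, hz, hzS⟩
  exact intrinsicInterior_subset.trans (subset_ratPolyhedron_of_mem_intrinsicInterior hS hz hzS)

end RatPolyhedron

section FourierMotzkin

theorem exists_between_of_finite {A B : Set ℝ} (hA : A.Finite) (hB : B.Finite)
    (h : ∀ a ∈ A, ∀ b ∈ B, a ≤ b) : ∃ z, (∀ a ∈ A, a ≤ z) ∧ ∀ b ∈ B, z ≤ b := by
  rcases A.eq_empty_or_nonempty with rfl | hAne
  · obtain ⟨z, hz⟩ := hB.bddBelow
    exact ⟨z, by simp, hz⟩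
  · exact ⟨sSup A, fun a ha => le_csSup hA.bddAbove ha, fun b hb => csSup_le hAne (h · · b hb)⟩

variable {d : ℕ}

def fourierMotzkin (S : Set (RatAffine (d + 1))) : Set (RatAffine d) :=
  init '' {p ∈ S | p.lastCoeff = 0} ∪
    (fun pq => fmCombine pq.1 pq.2) '' {pq ∈ S ×ˢ S | 0 < pq.1.lastCoeff ∧ pq.2.lastCoeff < 0}

theorem Set.Finite.fourierMotzkin {S : Set (RatAffine (d + 1))} (hS : S.Finite) :
    (fourierMotzkin S).Finite :=
  ((hS.subset (sep_subset _ _)).image _).union (((hS.prod hS).subset (sep_subset _ _)).image _)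

theorem lastRoot_le_lastRoot {p q : RatAffine (d + 1)} (hpc : 0 < p.lastCoeff)
    (hqc : q.lastCoeff < 0) {y : Fin d → ℝ} (h : 0 ≤ (fmCombine p q).eval y) :
    p.lastRoot y ≤ q.lastRoot y := by
  rw [eval_fmCombine p q y (p.lastRoot y), eval_snoc_eq_mul_sub_lastRoot hpc.ne',
    eval_snoc_eq_mul_sub_lastRoot hqc.ne, sub_self, mul_zero, mul_zero, zero_add] at h
  have hq : (q.lastCoeff : ℝ) < 0 := by exact_mod_cast hqc
  have hp : (0 : ℝ) < p.lastCoeff := by exact_mod_cast hpc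
  nlinarith [mul_pos hp (neg_pos.2 hq)]

theorem exists_snoc_mem_ratPolyhedron_of_mem_fourierMotzkin {S : Set (RatAffine (d + 1))}
    (hS : S.Finite) {y : Fin d → ℝ} (hy : y ∈ ratPolyhedron (fourierMotzkin S)) :
    ∃ z, Fin.snoc y z ∈ ratPolyhedron S := by
  obtain ⟨z, hlo, hup⟩ := exists_between_of_finite
    ((hS.subset (sep_subset S fun p => 0 < p.lastCoeff)).image (lastRoot · y))
    ((hS.subset (sep_subset S fun p => p.lastCoeff < 0)).image (lastRoot · y))
    (by
      rintro _ ⟨p, ⟨hp, hpc⟩, rfl⟩ _ ⟨q, ⟨hq, hqc⟩, rfl⟩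
      exact lastRoot_le_lastRoot hpc hqc (hy _ (Or.inr ⟨(p, q), ⟨⟨hp, hq⟩, hpc, hqc⟩, rfl⟩)))
  refine ⟨z, fun p hp => ?_⟩
  rcases lt_trichotomy p.lastCoeff 0 with hc | hc | hc
  · have : (p.lastCoeff : ℝ) < 0 := by exact_mod_cast hc
    rw [eval_snoc_eq_mul_sub_lastRoot hc.ne]
    nlinarith [hup _ ⟨p, ⟨hp, hc⟩, rfl⟩]
  · rw [eval_snoc, hc]
    simpa using hy _ (Or.inl ⟨p, ⟨hp, hc⟩, rfl⟩)
  · have : (0 : ℝ) < p.lastCoeff := by exact_mod_cast hc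
    rw [eval_snoc_eq_mul_sub_lastRoot hc.ne']
    nlinarith [hlo _ ⟨p, ⟨hp, hc⟩, rfl⟩]

theorem mem_ratPolyhedron_fourierMotzkin {S : Set (RatAffine (d + 1))} (hS : S.Finite)
    {y : Fin d → ℝ} :
    y ∈ ratPolyhedron (fourierMotzkin S) ↔ ∃ z, Fin.snoc y z ∈ ratPolyhedron S := by
  refine ⟨exists_snoc_mem_ratPolyhedron_of_mem_fourierMotzkin hS, ?_⟩
  rintro ⟨z, hz⟩ _ (⟨p, ⟨hp, hc⟩, rfl⟩ | ⟨⟨p, q⟩, ⟨⟨hp, hq⟩, hpc, hqc⟩, rfl⟩)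
  · simpa [eval_snoc, hc] using hz p hp
  · have : (q.lastCoeff : ℝ) < 0 := by exact_mod_cast hqc
    have : (0 : ℝ) < p.lastCoeff := by exact_mod_cast hpc
    rw [eval_fmCombine p q y z]
    nlinarith [hz p hp, hz q hq]

theorem exists_ratPolyhedron_eq_proj {k : ℕ} (N : ℕ) {S : Set (RatAffine (k + N))}
    (hS : S.Finite) : ∃ S' : Set (RatAffine k), S'.Finite ∧
      ∀ y, y ∈ ratPolyhedron S' ↔ ∃ w : Fin N → ℝ, Fin.append y w ∈ ratPolyhedron S := by
  induction N with
  | zero => exact ⟨S, hS, fun y => ⟨fun hy => ⟨Fin.elim0, by simpa using hy⟩,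
      fun ⟨w, hw⟩ => by simpa [Subsingleton.elim w Fin.elim0] using hw⟩⟩
  | succ N ih =>
    obtain ⟨S', hS', hproj⟩ := ih hS.fourierMotzkin
    refine ⟨S', hS', fun y => ?_⟩
    simp only [hproj, mem_ratPolyhedron_fourierMotzkin hS, ← Fin.append_snoc]
    exact ⟨fun ⟨w, z, h⟩ => ⟨_, h⟩, fun ⟨w, h⟩ => ⟨Fin.init w, w (Fin.last N), by
      rwa [Fin.snoc_init_self]⟩⟩

end FourierMotzkin

section VertexToHalfspace

open scoped Pointwise in
theorem exists_ratPolyhedron_eq_image_mulVec {k N : ℕ} {S : Set (RatAffine N)} (hS : S.Finite)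
    (M : Matrix (Fin k) (Fin N) ℚ) : ∃ S' : Set (RatAffine k), S'.Finite ∧
      (M.map (↑)).mulVec '' ratPolyhedron S = ratPolyhedron S' := by
  classical
  -- The image is the projection to `y` of `{(y, w) | w ∈ ratPolyhedron S, y = M w}`.
  let liftRight : RatAffine N → RatAffine (k + N) := fun p => (Fin.append 0 p.1, p.2)
  let graphRow : Fin k → RatAffine (k + N) := fun i => (Fin.append (Pi.single i 1) (-M i), 0)
  have hfin : (liftRight '' S ∪ (range graphRow ∪ -range graphRow)).Finite :=
    (hS.image _).union ((finite_range _).union (finite_range _).neg)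
  obtain ⟨S', hS', hproj⟩ := exists_ratPolyhedron_eq_proj N hfin
  refine ⟨S', hS', ext fun y => ?_⟩
  simp only [mem_image, hproj]
  refine exists_congr fun w => ?_
  rw [ratPolyhedron_union, mem_inter_iff, mem_ratPolyhedron_union_neg]
  simp only [mem_ratPolyhedron, forall_mem_image, forall_mem_range]
  refine and_congr (forall₂_congr fun p _ => ?_) ?_
  · simp [liftRight, RatAffine.eval_append]
  · simp only [graphRow, RatAffine.eval_append]
    simp [RatAffine.eval_apply, funext_iff, Matrix.mulVec, dotProduct, Pi.single_apply,
      apply_ite ((↑) : ℚ → ℝ), ite_mul, add_neg_eq_zero]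
    exact forall_congr' fun i => eq_comm

theorem exists_ratPolyhedron_eq_stdSimplex (N : ℕ) :
    ∃ S : Set (RatAffine N), S.Finite ∧ stdSimplex ℝ (Fin N) = ratPolyhedron S := by
  classical
  refine ⟨range (fun j => (Pi.single j 1, 0)) ∪ ({(1, -1)} ∪ -{(1, -1)}),
    (finite_range _).union ((finite_singleton _).union (finite_singleton _).neg), ext fun w => ?_⟩
  rw [ratPolyhedron_union, mem_inter_iff, mem_ratPolyhedron_union_neg]
  simp [stdSimplex, mem_ratPolyhedron, RatAffine.eval_apply, Pi.single_apply, add_neg_eq_zero,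
    apply_ite ((↑) : ℚ → ℝ), ite_mul]

theorem Matrix.convexHull_range_col_eq_image_stdSimplex {m n : Type*} [Fintype n] [DecidableEq n]
    (A : Matrix m n ℝ) : convexHull ℝ (range A.col) = A.mulVec '' stdSimplex ℝ n := by
  rw [← convexHull_rangle_single_eq_stdSimplex, ← Matrix.coe_mulVecLin,
    LinearMap.image_convexHull, ← range_comp]
  congr 2
  ext j : 1
  simp

theorem IsRationalPolytope.isBounded {k : ℕ} {Q : Set (Fin k → ℝ)} (hQ : IsRationalPolytope Q) :
    Bornology.IsBounded Q := by
  obtain ⟨T, -, -, rfl⟩ := hQ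
  exact (T.finite_toSet.isCompact_convexHull (𝕜 := ℝ)).isBounded

theorem IsRationalPolytope.exists_ratPolyhedron_eq {k : ℕ} {Q : Set (Fin k → ℝ)}
    (hQ : IsRationalPolytope Q) : ∃ S : Set (RatAffine k), S.Finite ∧ Q = ratPolyhedron S := by
  obtain ⟨T, -, hrat, rfl⟩ := hQ
  obtain ⟨N, v, hv⟩ := T.finite_toSet.fin_embedding
  choose q hq using fun j => hrat (v j) (Finset.mem_coe.1 (hv ▸ mem_range_self j))
  let M : Matrix (Fin k) (Fin N) ℚ := .of fun i j => q j i
  have hcol : (M.map ((↑) : ℚ → ℝ)).col = v := funext fun j => funext fun i => (hq j i).symm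
  obtain ⟨S₀, hS₀, hsimplex⟩ := exists_ratPolyhedron_eq_stdSimplex N
  obtain ⟨S, hS, himage⟩ := exists_ratPolyhedron_eq_image_mulVec hS₀ M
  refine ⟨S, hS, ?_⟩
  rw [← hv, ← hcol, Matrix.convexHull_range_col_eq_image_stdSimplex, hsimplex, himage]

end VertexToHalfspace

section HalfspaceToVertex

open Matrix in
theorem Matrix.exists_eq_map_of_mulVec_eq {K L m n : Type*} [Field K] [Field L] [LinearOrder L]
    [IsStrictOrderedRing L] [Fintype m] [Fintype n] [DecidableEq n] (f : K →+* L)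
    (A : Matrix m n K) (b : m → K) {x : n → L} (hx : A.map f *ᵥ x = f ∘ b)
    (hker : ∀ v, A.map f *ᵥ v = 0 → v = 0) : ∃ y : n → K, x = f ∘ y := by
  -- `Aᵀ A` is invertible since `v ⬝ᵥ Aᵀ A v = A v ⬝ᵥ A v`, so `x = (Aᵀ A)⁻¹ Aᵀ b`.
  have hgram : ∀ v, ((A.map f)ᵀ * A.map f) *ᵥ v = 0 → v = 0 := by
    intro v hv
    refine hker v (dotProduct_self_eq_zero.1 ?_)
    have : (A.map f *ᵥ v) ⬝ᵥ (A.map f *ᵥ v) = v ⬝ᵥ (((A.map f)ᵀ * A.map f) *ᵥ v) := by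
      rw [← mulVec_mulVec, dotProduct_mulVec v, vecMul_transpose]
    rw [this, hv, dotProduct_zero]
  have hdet : (Aᵀ * A).det ≠ 0 := by
    intro h
    obtain ⟨v, hv0, hv⟩ := exists_mulVec_eq_zero_iff.2 <| show ((A.map f)ᵀ * A.map f).det = 0 by
      rw [← transpose_map, ← Matrix.map_mul, ← RingHom.mapMatrix_apply, ← f.map_det, h, map_zero]
    exact hv0 (hgram v hv)
  obtain ⟨y, hy⟩ : ∃ y : n → K, (Aᵀ * A) *ᵥ y = Aᵀ *ᵥ b :=
    ⟨(Aᵀ * A)⁻¹ *ᵥ (Aᵀ *ᵥ b), by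
      rw [mulVec_mulVec, mul_nonsing_inv _ (isUnit_iff_ne_zero.2 hdet), one_mulVec]⟩
  have hsame : ((A.map f)ᵀ * A.map f) *ᵥ (f ∘ y) = ((A.map f)ᵀ * A.map f) *ᵥ x := by
    rw [← mulVec_mulVec x, hx, ← transpose_map, ← Matrix.map_mul]
    ext i
    rw [← f.map_mulVec, ← f.map_mulVec, hy]
  exact ⟨y, (sub_eq_zero.1 (hgram _ (by rw [mulVec_sub, hsame, sub_self]))).symm⟩

variable {d : ℕ} {S : Set (RatAffine d)}

theorem eq_zero_of_mem_extremePoints_ratPolyhedron {x : Fin d → ℝ} (hS : S.Finite)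
    (hx : x ∈ extremePoints ℝ (ratPolyhedron S)) {v : Fin d → ℝ}
    (hv : ∀ p ∈ S, p.eval x = 0 → p.eval.linear v = 0) : v = 0 := by
  -- Inactive constraints are strict at `x` and active ones are constant along `v`, so `x ± t • v`
  -- stays in the polyhedron for small `t`.
  have hline : ∀ᶠ t in 𝓝 (0 : ℝ), x + t • v ∈ ratPolyhedron S := by
    refine hS.eventually_all.2 fun p hp => ?_
    have heval : ∀ t : ℝ, p.eval (x + t • v) = p.eval x + t * p.eval.linear v := fun t => by
      rw [add_comm, ← vadd_eq_add, p.eval.map_vadd, vadd_eq_add, map_smul, smul_eq_mul, add_comm]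
    by_cases h0 : p.eval x = 0
    · exact Eventually.of_forall fun t => by simp [heval, h0, hv p hp h0]
    · have hpos : 0 < p.eval x := (hx.1 p hp).lt_of_ne' h0
      have hlim : Tendsto (fun t : ℝ => p.eval x + t * p.eval.linear v) (𝓝 0) (𝓝 (p.eval x)) := by
        simpa using ((tendsto_id (x := 𝓝 (0 : ℝ))).mul_const (p.eval.linear v)).const_add (p.eval x)
      exact (hlim.eventually (lt_mem_nhds hpos)).mono fun t ht => (heval t).symm ▸ ht.le
  have hsym := hline.and ((continuous_neg.tendsto' (0 : ℝ) 0 neg_zero).eventually hline)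
  obtain ⟨t, ⟨h₁, h₂⟩, ht⟩ :=
    ((hsym.filter_mono nhdsWithin_le_nhds).and (self_mem_nhdsWithin : Ioi (0 : ℝ) ∈ 𝓝[>] 0)).exists
  have hseg : x ∈ openSegment ℝ (x + t • v) (x + (-t) • v) :=
    ⟨1 / 2, 1 / 2, by norm_num, by norm_num, by norm_num, by module⟩
  exact (smul_eq_zero.1 (add_eq_left.1 (hx.2 h₁ h₂ hseg))).resolve_left ht.ne'

theorem finite_extremePoints_ratPolyhedron (hS : S.Finite) :
    (extremePoints ℝ (ratPolyhedron S)).Finite := by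
  let active : (Fin d → ℝ) → Set (RatAffine d) := fun x => {p ∈ S | p.eval x = 0}
  refine Finite.of_finite_image (f := active) (hS.finite_subsets.subset ?_) fun x hx y hy hxy => ?_
  · rintro _ ⟨x, -, rfl⟩
    exact sep_subset _ _
  · refine sub_eq_zero.1 (eq_zero_of_mem_extremePoints_ratPolyhedron hS hx fun p hp hpx => ?_)
    have hpy : p.eval y = 0 := (show p ∈ active y from hxy ▸ ⟨hp, hpx⟩).2
    rw [← vsub_eq_sub, AffineMap.linearMap_vsub, hpx, hpy, vsub_self]

theorem exists_rat_of_mem_extremePoints_ratPolyhedron {x : Fin d → ℝ} (hS : S.Finite)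
    (hx : x ∈ extremePoints ℝ (ratPolyhedron S)) : ∃ y : Fin d → ℚ, x = fun i => (y i : ℝ) := by
  let A := {p ∈ S | p.eval x = 0}
  have : Fintype A := (hS.subset (sep_subset _ _)).fintype
  refine Matrix.exists_eq_map_of_mulVec_eq (Rat.castHom ℝ) (.of fun (p : A) i => p.1.1 i)
    (fun p => -p.1.2) ?_
    fun v hv => eq_zero_of_mem_extremePoints_ratPolyhedron hS hx fun p hp hpx => ?_
  · ext p
    have := p.2.2
    simp only [RatAffine.eval_apply] at this
    simp [Matrix.mulVec, dotProduct]
    linarith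
  · simpa [Matrix.mulVec, dotProduct, RatAffine.eval_linear_apply] using congrFun hv ⟨p, hp, hpx⟩

theorem isRationalPolytope_ratPolyhedron (hS : S.Finite) (hne : (ratPolyhedron S).Nonempty)
    (hbdd : Bornology.IsBounded (ratPolyhedron S)) : IsRationalPolytope (ratPolyhedron S) := by
  have hE := finite_extremePoints_ratPolyhedron hS
  have hKM := closure_convexHull_extremePoints
    (Metric.isCompact_of_isClosed_isBounded (isClosed_ratPolyhedron S) hbdd)
    (convex_ratPolyhedron S)
  rw [(hE.isClosed_convexHull (𝕜 := ℝ)).closure_eq] at hKM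
  refine ⟨hE.toFinset, ?_, fun x hx => ?_, by rw [hE.coe_toFinset, hKM]⟩
  · rw [hE.toFinset_nonempty, ← convexHull_nonempty_iff (𝕜 := ℝ), hKM]
    exact hne
  · obtain ⟨y, rfl⟩ := exists_rat_of_mem_extremePoints_ratPolyhedron hS (hE.mem_toFinset.1 hx)
    exact fun i => ⟨y i, rfl⟩

end HalfspaceToVertex

section Chambers

variable {k : ℕ}

theorem exists_isRatPolyChamberDecomp {ι : Type*} [Finite ι] {P : Set (Fin k → ℝ)}
    (C : ι → Set (Fin k → ℝ)) (hrat : ∀ i, (C i).Nonempty → IsRationalPolytope (C i))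
    (hcover : ⋃ i, C i = P)
    (heq : ∀ i j, ∀ x ∈ intrinsicInterior ℝ (C i), x ∈ intrinsicInterior ℝ (C j) → C i = C j) :
    ∃ (m : ℕ) (Ps : Fin m → Set (Fin k → ℝ)),
      IsRatPolyChamberDecomp P m Ps ∧ ∀ s, ∃ i, C i = Ps s := by
  obtain ⟨m, Ps, hPs⟩ := ((finite_range C).subset (sep_subset (range C) Set.Nonempty)).fin_embedding
  have hmem : ∀ s, Ps s ∈ {D ∈ range C | D.Nonempty} := fun s => hPs ▸ mem_range_self s
  refine ⟨m, Ps, ⟨fun s => ?_, ?_, fun s t hst => disjoint_left.2 fun x hxs hxt => ?_⟩,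
    fun s => (hmem s).1⟩
  · obtain ⟨⟨i, hi⟩, hne⟩ := hmem s
    exact hi ▸ hrat i (hi ▸ hne)
  · rw [← hcover, ← sUnion_range, hPs]
    ext x
    exact ⟨fun ⟨_, ⟨⟨i, hi⟩, _⟩, hx⟩ => mem_iUnion.2 ⟨i, hi ▸ hx⟩,
      fun hx => let ⟨i, hi⟩ := mem_iUnion.1 hx; ⟨C i, ⟨⟨i, rfl⟩, ⟨x, hi⟩⟩, hi⟩⟩
  · obtain ⟨⟨i, hi⟩, -⟩ := hmem s
    obtain ⟨⟨j, hj⟩, -⟩ := hmem t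
    exact hst (Ps.injective (hi.symm.trans ((heq i j x (hi ▸ hxs) (hj ▸ hxt)).trans hj)))

def arrangementChamber (SP G : Set (RatAffine k)) (σ : G → Bool) : Set (Fin k → ℝ) :=
  ratPolyhedron (SP ∪ range fun g : G => if σ g then g.1 else -g.1)

variable {SP G : Set (RatAffine k)}

theorem arrangementChamber_subset (σ : G → Bool) :
    arrangementChamber SP G σ ⊆ ratPolyhedron SP := by
  rw [arrangementChamber, ratPolyhedron_union]
  exact inter_subset_left

theorem iUnion_arrangementChamber : ⋃ σ, arrangementChamber SP G σ = ratPolyhedron SP := by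
  refine (iUnion_subset arrangementChamber_subset).antisymm fun x hx => mem_iUnion.2
    ⟨fun g => decide (0 ≤ g.1.eval x), ?_⟩
  rw [arrangementChamber, ratPolyhedron_union]
  refine ⟨hx, ?_⟩
  rintro _ ⟨g, rfl⟩
  by_cases h : 0 ≤ g.1.eval x
  · simp [h]
  · simpa [h] using (not_le.1 h).le

theorem signDefiniteOn_arrangementChamber (σ : G → Bool) (g : G) :
    SignDefiniteOn g.1.eval (arrangementChamber SP G σ) := by
  have hg : ∀ x ∈ arrangementChamber SP G σ, 0 ≤ (if σ g then g.1 else -g.1).eval x :=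
    fun x hx => hx _ (Or.inr ⟨g, rfl⟩)
  cases hσ : σ g
  · exact Or.inr fun x hx => by simpa [hσ] using hg x hx
  · exact Or.inl fun x hx => by simpa [hσ] using hg x hx

theorem arrangementChamber_subset_of_mem_intrinsicInterior {σ τ : G → Bool} {x : Fin k → ℝ}
    (hσ : x ∈ intrinsicInterior ℝ (arrangementChamber SP G σ))
    (hτ : x ∈ arrangementChamber SP G τ) :
    arrangementChamber SP G σ ⊆ arrangementChamber SP G τ := by
  refine subset_ratPolyhedron_of_mem_intrinsicInterior ?_ hσ hτ
  rintro p (hp | ⟨g, rfl⟩)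
  · exact Or.inl fun y hy => arrangementChamber_subset σ hy p hp
  · have hg := signDefiniteOn_arrangementChamber (SP := SP) σ g
    dsimp only
    split_ifs
    · exact hg
    · rw [show ⇑(-g.1).eval = -⇑g.1.eval from funext (eval_neg g.1)]
      exact hg.neg

theorem arrangementChamber_eq_of_mem_intrinsicInterior {σ τ : G → Bool} {x : Fin k → ℝ}
    (hσ : x ∈ intrinsicInterior ℝ (arrangementChamber SP G σ))
    (hτ : x ∈ intrinsicInterior ℝ (arrangementChamber SP G τ)) :
    arrangementChamber SP G σ = arrangementChamber SP G τ :=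
  (arrangementChamber_subset_of_mem_intrinsicInterior hσ (intrinsicInterior_subset hτ)).antisymm
    (arrangementChamber_subset_of_mem_intrinsicInterior hτ (intrinsicInterior_subset hσ))

end Chambers

theorem exists_ratPolyChamberDecomp_adapted_on_faces_general {k n : ℕ}
    (P : Set (Fin k → ℝ)) (hP : IsRationalPolytope P)
    (Q : Fin n → Set (Fin k → ℝ))
    (hQ : ∀ i, IsRationalPolytope (Q i)) :
    ∃ (m : ℕ) (Ps : Fin m → Set (Fin k → ℝ)),
      IsRatPolyChamberDecomp P m Ps ∧
      ∀ (s : Fin m) (F : Set (Fin k → ℝ)), IsFace (Ps s) F →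
        ∀ i : Fin n,
          intrinsicInterior ℝ F ⊆ Q i ∨ Disjoint (intrinsicInterior ℝ F) (Q i) := by
  have hbdd := hP.isBounded
  obtain ⟨SP, hSP, rfl⟩ := hP.exists_ratPolyhedron_eq
  choose SQ hSQ hQS using fun i => (hQ i).exists_ratPolyhedron_eq
  let G := ⋃ i, SQ i
  have : Finite G := (finite_iUnion hSQ).to_subtype
  obtain ⟨m, Ps, hdecomp, hPs⟩ := exists_isRatPolyChamberDecomp (arrangementChamber SP G)
    (fun σ hne => isRationalPolytope_ratPolyhedron (hSP.union (finite_range _)) hne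
      (hbdd.subset (arrangementChamber_subset σ)))
    iUnion_arrangementChamber fun _ _ _ => arrangementChamber_eq_of_mem_intrinsicInterior
  refine ⟨m, Ps, hdecomp, fun s F hF i => ?_⟩
  obtain ⟨σ, hσ⟩ := hPs s
  rw [← hσ] at hF
  rw [hQS i]
  exact intrinsicInterior_subset_or_disjoint_ratPolyhedron fun p hp =>
    (signDefiniteOn_arrangementChamber σ ⟨p, mem_iUnion_of_mem i hp⟩).mono hF.2.2.2.subset

/-- Given finitely many rational polytopes `Q i` inside a rational polytope `P`,
there is a finite rational polytope chamber decomposition of `P` such that on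
the intrinsic interior of each face of each chamber, membership in each `Q i`
is constant: the relative interior of each face is either contained in `Q i` or
disjoint from it. -/
theorem exists_ratPolyChamberDecomp_adapted_on_faces {k n : ℕ}
    (P : Set (Fin k → ℝ)) (hP : IsRationalPolytope P)
    (Q : Fin n → Set (Fin k → ℝ))
    (hQ : ∀ i, IsRationalPolytope (Q i)) (hQP : ∀ i, Q i ⊆ P) :
    ∃ (m : ℕ) (Ps : Fin m → Set (Fin k → ℝ)),
      IsRatPolyChamberDecomp P m Ps ∧
      ∀ (s : Fin m) (F : Set (Fin k → ℝ)), IsFace (Ps s) F →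
        ∀ i : Fin n,
          intrinsicInterior ℝ F ⊆ Q i ∨ Disjoint (intrinsicInterior ℝ F) (Q i) :=
  exists_ratPolyChamberDecomp_adapted_on_faces_general P hP Q hQ
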